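/- Let γ ∈ (1/3, 1/2] and (X,𝕏), (X̃,𝕏̃) be γ-Hölder rough paths on [0,T] in ℝᵈ, and let h be of bounded variation with variation on [s,t] bounded by ‖h‖_{1;γ}|t−s|^γ. Then the translation map τ_h is Lipschitz: ‖τ_h(X,𝕏) − τ_h(X̃,𝕏̃)‖_γ ≤ M·(1 + ‖h‖_{1;γ})·‖(X,𝕏) − (X̃,𝕏̃)‖_γ for a constant M depending only on T and γ, where the rough path distance is ‖X−X̃‖_γ + ‖𝕏−𝕏̃‖_{2γ}. -/

import Mathlib

set_option maxHeartbeats 2000000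

open Set

/-- `I` is the Riemann–Stieltjes integral `∫ₛᵗ f dg`, as a limit of Riemann sums over
partitions of `[s,t]` of small mesh. -/
def IsRS (f g : ℝ → ℝ) (s t I : ℝ) : Prop :=
  ∀ ε > (0:ℝ), ∃ δ > (0:ℝ), ∀ n : ℕ, ∀ p : ℕ → ℝ,
    p 0 = s → p n = t → (∀ i < n, p i ≤ p (i + 1)) → (∀ i < n, p (i + 1) - p i < δ) →
    |(∑ i ∈ Finset.range n, f (p i) * (g (p (i + 1)) - g (p i))) - I| < ε

/- ### auxiliary lemmas -/

lemma coord_abs_le_norm {d : ℕ} (v : EuclideanSpace ℝ (Fin d)) (i : Fin d) : |v i| ≤ ‖v‖ := by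
  rw [EuclideanSpace.norm_eq]
  calc |v i| = Real.sqrt (‖v i‖ ^ 2) := by
        rw [Real.sqrt_sq_eq_abs, Real.norm_eq_abs, abs_abs]
    _ ≤ _ := Real.sqrt_le_sqrt (Finset.single_le_sum (fun j _ => sq_nonneg ‖v j‖)
        (Finset.mem_univ i))

lemma exists_partition (s t δ : ℝ) (hst : s ≤ t) (hδ : 0 < δ) :
    ∃ n : ℕ, ∃ p : ℕ → ℝ, p 0 = s ∧ p n = t ∧ (∀ i < n, p i ≤ p (i + 1)) ∧
      (∀ i < n, p (i + 1) - p i < δ) := by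
  set n : ℕ := ⌈(t - s) / δ⌉₊ + 1 with hn
  have hn0 : (0:ℝ) < n := by positivity
  refine ⟨n, fun i => s + i * ((t - s) / n), by simp, ?_, ?_, ?_⟩
  · field_simp; ring
  · intro i _
    have h1 : (0:ℝ) ≤ (t - s) / n := by
      apply div_nonneg (by linarith) hn0.le
    push_cast at h1 ⊢
    nlinarith
  · intro i _
    have hlt : (t - s) / δ < n := by
      have := Nat.le_ceil ((t - s) / δ)
      have : ((⌈(t - s) / δ⌉₊ : ℝ)) < n := by
        rw [hn]; push_cast; linarith
      linarith [Nat.le_ceil ((t - s) / δ)]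
    have hts : t - s < n * δ := by
      rw [div_lt_iff₀ hδ] at hlt; linarith
    have : (t - s) / n < δ := by
      rw [div_lt_iff₀ hn0]; linarith
    push_cast at this ⊢
    linarith

/-- If every Riemann sum over a monotone partition of `[s,t]` is bounded by `B`, then the
RS integral is bounded by `B`. -/
lemma rs_abs_le {f g : ℝ → ℝ} {s t I B : ℝ} (hst : s ≤ t) (hI : IsRS f g s t I)
    (hsum : ∀ n : ℕ, ∀ p : ℕ → ℝ, p 0 = s → p n = t → (∀ i < n, p i ≤ p (i + 1)) →
      |∑ i ∈ Finset.range n, f (p i) * (g (p (i + 1)) - g (p i))| ≤ B) :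
    |I| ≤ B := by
  by_contra hc
  push_neg at hc
  obtain ⟨δ, hδ, hδ'⟩ := hI (|I| - B) (by linarith)
  obtain ⟨n, p, h0, hn, hm, hmesh⟩ := exists_partition s t δ hst hδ
  have h1 := hδ' n p h0 hn hm hmesh
  have h2 := hsum n p h0 hn hm
  have h4 : |I| - |∑ i ∈ Finset.range n, f (p i) * (g (p (i + 1)) - g (p i))| ≤
      |∑ i ∈ Finset.range n, f (p i) * (g (p (i + 1)) - g (p i)) - I| := by
    rw [abs_sub_comm]
    exact abs_sub_abs_le_abs_sub I _
  linarith

lemma rs_sub_f {f f' g : ℝ → ℝ} {s t I I' : ℝ} (h : IsRS f g s t I) (h' : IsRS f' g s t I') :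
    IsRS (fun r => f r - f' r) g s t (I - I') := by
  intro ε hε
  obtain ⟨δ1, hδ1, H1⟩ := h (ε / 2) (by linarith)
  obtain ⟨δ2, hδ2, H2⟩ := h' (ε / 2) (by linarith)
  refine ⟨min δ1 δ2, lt_min hδ1 hδ2, fun n p h0 hn hm hmesh => ?_⟩
  have K1 := H1 n p h0 hn hm (fun i hi => lt_of_lt_of_le (hmesh i hi) (min_le_left _ _))
  have K2 := H2 n p h0 hn hm (fun i hi => lt_of_lt_of_le (hmesh i hi) (min_le_right _ _))
  have : ∑ i ∈ Finset.range n, (f (p i) - f' (p i)) * (g (p (i + 1)) - g (p i)) =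
      (∑ i ∈ Finset.range n, f (p i) * (g (p (i + 1)) - g (p i))) -
      ∑ i ∈ Finset.range n, f' (p i) * (g (p (i + 1)) - g (p i)) := by
    rw [← Finset.sum_sub_distrib]; apply Finset.sum_congr rfl; intros; ring
  rw [this]
  have heq : (∑ i ∈ Finset.range n, f (p i) * (g (p (i + 1)) - g (p i))) -
      (∑ i ∈ Finset.range n, f' (p i) * (g (p (i + 1)) - g (p i))) - (I - I') =
      ((∑ i ∈ Finset.range n, f (p i) * (g (p (i + 1)) - g (p i))) - I) -
      ((∑ i ∈ Finset.range n, f' (p i) * (g (p (i + 1)) - g (p i))) - I') := by ring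
  rw [heq]
  exact lt_of_le_of_lt (abs_sub _ _) (by linarith)

lemma rs_sub_g {f g g' : ℝ → ℝ} {s t I I' : ℝ} (h : IsRS f g s t I) (h' : IsRS f g' s t I') :
    IsRS f (fun r => g r - g' r) s t (I - I') := by
  intro ε hε
  obtain ⟨δ1, hδ1, H1⟩ := h (ε / 2) (by linarith)
  obtain ⟨δ2, hδ2, H2⟩ := h' (ε / 2) (by linarith)
  refine ⟨min δ1 δ2, lt_min hδ1 hδ2, fun n p h0 hn hm hmesh => ?_⟩
  have K1 := H1 n p h0 hn hm (fun i hi => lt_of_lt_of_le (hmesh i hi) (min_le_left _ _))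
  have K2 := H2 n p h0 hn hm (fun i hi => lt_of_lt_of_le (hmesh i hi) (min_le_right _ _))
  have : ∑ i ∈ Finset.range n, f (p i) * ((g (p (i+1)) - g' (p (i+1))) - (g (p i) - g' (p i))) =
      (∑ i ∈ Finset.range n, f (p i) * (g (p (i + 1)) - g (p i))) -
      ∑ i ∈ Finset.range n, f (p i) * (g' (p (i + 1)) - g' (p i)) := by
    rw [← Finset.sum_sub_distrib]; apply Finset.sum_congr rfl; intros; ring
  rw [this]
  have heq : (∑ i ∈ Finset.range n, f (p i) * (g (p (i + 1)) - g (p i))) -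
      (∑ i ∈ Finset.range n, f (p i) * (g' (p (i + 1)) - g' (p i))) - (I - I') =
      ((∑ i ∈ Finset.range n, f (p i) * (g (p (i + 1)) - g (p i))) - I) -
      ((∑ i ∈ Finset.range n, f (p i) * (g' (p (i + 1)) - g' (p i))) - I') := by ring
  rw [heq]
  exact lt_of_le_of_lt (abs_sub _ _) (by linarith)

lemma rs_unique {f g : ℝ → ℝ} {s t I I' : ℝ} (hst : s ≤ t) (h : IsRS f g s t I)
    (h' : IsRS f g s t I') : I = I' := by
  by_contra hc
  obtain ⟨δ1, hδ1, H1⟩ := h (|I - I'| / 2) (by have := abs_pos.mpr (sub_ne_zero.mpr hc); linarith)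
  obtain ⟨δ2, hδ2, H2⟩ := h' (|I - I'| / 2) (by have := abs_pos.mpr (sub_ne_zero.mpr hc); linarith)
  obtain ⟨n, p, h0, hn, hm, hmesh⟩ := exists_partition s t (min δ1 δ2) hst (lt_min hδ1 hδ2)
  have K1 := H1 n p h0 hn hm (fun i hi => lt_of_lt_of_le (hmesh i hi) (min_le_left _ _))
  have K2 := H2 n p h0 hn hm (fun i hi => lt_of_lt_of_le (hmesh i hi) (min_le_right _ _))
  rw [abs_sub_comm] at K1 K2
  have h4 : |I - I'| ≤ |I - ∑ i ∈ Finset.range n, f (p i) * (g (p (i + 1)) - g (p i))| +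
      |I' - ∑ i ∈ Finset.range n, f (p i) * (g (p (i + 1)) - g (p i))| := by
    have heq : I - I' = (I - (∑ i ∈ Finset.range n, f (p i) * (g (p (i+1)) - g (p i)))) -
        (I' - (∑ i ∈ Finset.range n, f (p i) * (g (p (i+1)) - g (p i)))) := by ring
    rw [heq]
    exact abs_sub _ _
  have h5 := abs_nonneg (I - I')
  have h6 : |I - I'| > 0 := abs_pos.mpr (sub_ne_zero.mpr hc)
  linarith

/-- extend a finite partition to a monotone sequence -/
lemma partition_mono {n : ℕ} {p : ℕ → ℝ} (hm : ∀ i < n, p i ≤ p (i + 1)) :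
    Monotone (fun i => p (min i n)) := by
  apply monotone_nat_of_le_succ
  intro i
  show p (min i n) ≤ p (min (i + 1) n)
  rcases lt_or_ge i n with hi | hi
  · rw [min_eq_left hi.le, min_eq_left hi]
    exact hm i hi
  · rw [min_eq_right hi, min_eq_right (le_trans hi (Nat.le_succ i))]

lemma partition_mem {n : ℕ} {p : ℕ → ℝ} {s t : ℝ} (h0 : p 0 = s) (hn : p n = t)
    (hm : ∀ i < n, p i ≤ p (i + 1)) : ∀ k ≤ n, p k ∈ Icc s t := by
  intro k hk
  have H := partition_mono hm
  constructor
  · have := H (Nat.zero_le k)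
    simpa [h0, min_eq_left hk] using this
  · have := H hk
    simpa [hn, min_eq_left hk] using this

/-- sum of norms of increments of `h` along a partition is at most the variation bound. -/
lemma sum_norm_incr_le {d : ℕ} {n : ℕ} {p : ℕ → ℝ} {s t : ℝ} (h0 : p 0 = s) (hn : p n = t)
    (hm : ∀ i < n, p i ≤ p (i + 1)) (h : ℝ → EuclideanSpace ℝ (Fin d)) {V : ℝ} (hV0 : 0 ≤ V)
    (hV : eVariationOn h (Icc s t) ≤ ENNReal.ofReal V) :
    ∑ k ∈ Finset.range n, ‖h (p (k + 1)) - h (p k)‖ ≤ V := by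
  set u : ℕ → ℝ := fun i => p (min i n) with hu
  have hmono : Monotone u := partition_mono hm
  have hmem : ∀ i, u i ∈ Icc s t := fun i => partition_mem h0 hn hm _ (min_le_right i n)
  have key : (∑ i ∈ Finset.range n, edist (h (u (i + 1))) (h (u i))) ≤ eVariationOn h (Icc s t) :=
    eVariationOn.sum_le (f := h) (n := n) hmono hmem
  have hsum_eq : (∑ i ∈ Finset.range n, edist (h (u (i + 1))) (h (u i))) =
      ENNReal.ofReal (∑ k ∈ Finset.range n, ‖h (p (k + 1)) - h (p k)‖) := by
    rw [ENNReal.ofReal_sum_of_nonneg]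
    · apply Finset.sum_congr rfl
      intro i hi
      rw [Finset.mem_range] at hi
      rw [hu]
      simp only [min_eq_left hi.le, min_eq_left (Nat.succ_le_of_lt hi)]
      rw [edist_dist, dist_eq_norm]
    · intro i _; positivity
  rw [hsum_eq] at key
  have := le_trans key hV
  rwa [ENNReal.ofReal_le_ofReal_iff hV0] at this

/-- Abel summation identity. -/
lemma abel_sum (F G : ℕ → ℝ) (n : ℕ) :
    ∑ k ∈ Finset.range n, F k * (G (k + 1) - G k) =
      F n * G n - F 0 * G 0 - ∑ k ∈ Finset.range n, G (k + 1) * (F (k + 1) - F k) := by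
  induction n with
  | zero => simp
  | succ m ih =>
    rw [Finset.sum_range_succ, Finset.sum_range_succ, ih]
    ring

/-- Lipschitz continuity of the translation map `τ_h` on γ-Hölder rough paths:
`‖τ_h(X,𝕏) − τ_h(X̃,𝕏̃)‖_γ ≤ M·(1 + ‖h‖_{1;γ})·‖(X,𝕏) − (X̃,𝕏̃)‖_γ`.
Here `Ch = ‖h‖_{1;γ}` bounds the variation of `h` on `[s,t]` by `Ch·|t−s|^γ`;
`CX` bounds the rough path seminorms of `(X,𝕏)` and `(X̃,𝕏̃)`; `CD` bounds the
rough path distance seminorms of the difference; `τ_h(X,𝕏) = (X+h, 𝕏+I1+I2+I3)`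
with the entrywise Riemann–Stieltjes integrals `I1, I2, I3` (and similarly with
tildes). -/
theorem stmt19 (d : ℕ) (γ T : ℝ) (hγ : γ ∈ Ioc (1/3 : ℝ) (1/2)) (hT : 0 < T) :
    ∃ M > (0:ℝ), ∀ (X X' : ℝ → EuclideanSpace ℝ (Fin d))
      (XX XX' : ℝ → ℝ → Matrix (Fin d) (Fin d) ℝ)
      (h : ℝ → EuclideanSpace ℝ (Fin d)) (Ch CX CD : ℝ)
      (I1 I2 I3 J1 J2 J3 : ℝ → ℝ → Matrix (Fin d) (Fin d) ℝ),
      0 ≤ Ch → 0 ≤ CX → 0 ≤ CD →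
      -- `(X,𝕏)` and `(X̃,𝕏̃)` are γ-Hölder rough paths
      (∀ s ∈ Icc (0:ℝ) T, ∀ t ∈ Icc (0:ℝ) T,
        ‖X t - X s‖ ≤ CX * |t - s| ^ γ ∧ ‖X' t - X' s‖ ≤ CX * |t - s| ^ γ) →
      (∀ s t : ℝ, 0 ≤ s → s ≤ t → t ≤ T → ∀ i j : Fin d,
        |XX s t i j| ≤ CX * (t - s) ^ (2 * γ) ∧ |XX' s t i j| ≤ CX * (t - s) ^ (2 * γ)) →
      (∀ s u t : ℝ, 0 ≤ s → s ≤ u → u ≤ t → t ≤ T → ∀ i j : Fin d,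
        XX s t i j - XX u t i j - XX s u i j = (X u i - X s i) * (X t j - X u j) ∧
        XX' s t i j - XX' u t i j - XX' s u i j = (X' u i - X' s i) * (X' t j - X' u j)) →
      -- `h` has variation bounded by `Ch·|t−s|^γ` on subintervals of `[0,T]`
      (∀ s t : ℝ, 0 ≤ s → s ≤ t → t ≤ T →
        eVariationOn h (Icc s t) ≤ ENNReal.ofReal (Ch * (t - s) ^ γ)) →
      -- Riemann–Stieltjes integrals defining the translated areas
      (∀ s t : ℝ, 0 ≤ s → s ≤ t → t ≤ T → ∀ i j : Fin d,
        IsRS (fun r => X r i - X s i) (fun r => h r j) s t (I1 s t i j) ∧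
        IsRS (fun r => h r i - h s i) (fun r => X r j) s t (I2 s t i j) ∧
        IsRS (fun r => h r i - h s i) (fun r => h r j) s t (I3 s t i j) ∧
        IsRS (fun r => X' r i - X' s i) (fun r => h r j) s t (J1 s t i j) ∧
        IsRS (fun r => h r i - h s i) (fun r => X' r j) s t (J2 s t i j) ∧
        IsRS (fun r => h r i - h s i) (fun r => h r j) s t (J3 s t i j)) →
      -- the rough path distance between `(X,𝕏)` and `(X̃,𝕏̃)` is bounded by `CD`
      (∀ s ∈ Icc (0:ℝ) T, ∀ t ∈ Icc (0:ℝ) T,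
        ‖(X t - X' t) - (X s - X' s)‖ ≤ CD * |t - s| ^ γ) →
      (∀ s t : ℝ, 0 ≤ s → s ≤ t → t ≤ T → ∀ i j : Fin d,
        |XX s t i j - XX' s t i j| ≤ CD * (t - s) ^ (2 * γ)) →
      -- conclusion: Lipschitz bound for the translated rough paths
      (∀ s ∈ Icc (0:ℝ) T, ∀ t ∈ Icc (0:ℝ) T,
        ‖((X t + h t) - (X' t + h t)) - ((X s + h s) - (X' s + h s))‖ ≤
          M * (1 + Ch) * CD * |t - s| ^ γ) ∧
      (∀ s t : ℝ, 0 ≤ s → s ≤ t → t ≤ T → ∀ i j : Fin d,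
        |(XX s t i j + I1 s t i j + I2 s t i j + I3 s t i j) -
            (XX' s t i j + J1 s t i j + J2 s t i j + J3 s t i j)| ≤
          M * (1 + Ch) * CD * (t - s) ^ (2 * γ)) := by
  obtain ⟨hγ1, hγ2⟩ := hγ
  refine ⟨2, by norm_num, ?_⟩
  intro X X' XX XX' h Ch CX CD I1 I2 I3 J1 J2 J3 hCh hCX hCD _hX _hXX _hChen hVar hRS hD hDD
  constructor
  · -- first level
    intro s hs t ht
    have key := hD s hs t ht
    have heq : ((X t + h t) - (X' t + h t)) - ((X s + h s) - (X' s + h s)) =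
        (X t - X' t) - (X s - X' s) := by abel
    rw [heq]
    have h1 : (0:ℝ) ≤ CD * |t - s| ^ γ := by positivity
    nlinarith [key]
  · -- second level
    intro s t hs hst htT i j
    obtain ⟨hI1, hI2, hI3, hJ1, hJ2, hJ3⟩ := hRS s t hs hst htT i j
    have hts : 0 ≤ t - s := by linarith
    -- common constants
    set A : ℝ := CD * (t - s) ^ γ with hA
    have hA0 : 0 ≤ A := by positivity
    set V : ℝ := Ch * (t - s) ^ γ with hVdef
    have hV0 : 0 ≤ V := by positivity
    have hVar' := hVar s t hs hst htT
    -- bound on I1 - J1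
    have hd1 : IsRS (fun r => (X r i - X s i) - (X' r i - X' s i)) (fun r => h r j) s t
        (I1 s t i j - J1 s t i j) := rs_sub_f hI1 hJ1
    have hb1 : |I1 s t i j - J1 s t i j| ≤ A * V := by
      apply rs_abs_le hst hd1
      intro n p h0 hn hm
      have hf : ∀ k ≤ n, |(X (p k) i - X s i) - (X' (p k) i - X' s i)| ≤ A := by
        intro k hk
        obtain ⟨hk1, hk2⟩ := partition_mem h0 hn hm k hk
        have hmem : p k ∈ Icc (0:ℝ) T := ⟨by linarith, by linarith⟩
        have := hD s ⟨hs, by linarith⟩ (p k) hmem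
        have hcoord : |(X (p k) - X' (p k) - (X s - X' s)) i| ≤
            ‖(X (p k) - X' (p k)) - (X s - X' s)‖ := coord_abs_le_norm _ i
        have hvi : ((X (p k) - X' (p k) - (X s - X' s)) : EuclideanSpace ℝ (Fin d)) i =
            (X (p k) i - X s i) - (X' (p k) i - X' s i) := by
          simp [PiLp.sub_apply]; try ring
        rw [hvi] at hcoord
        have hpow : |p k - s| ^ γ ≤ (t - s) ^ γ := by
          rw [abs_of_nonneg (by linarith)]
          exact Real.rpow_le_rpow (by linarith) (by linarith) (by linarith)
        calc |(X (p k) i - X s i) - (X' (p k) i - X' s i)| ≤ CD * |p k - s| ^ γ :=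
              le_trans hcoord this
          _ ≤ CD * (t - s) ^ γ := by nlinarith [abs_nonneg (p k - s)]
      calc |∑ k ∈ Finset.range n, ((X (p k) i - X s i) - (X' (p k) i - X' s i)) *
            (h (p (k + 1)) j - h (p k) j)|
          ≤ ∑ k ∈ Finset.range n, |((X (p k) i - X s i) - (X' (p k) i - X' s i)) *
            (h (p (k + 1)) j - h (p k) j)| := Finset.abs_sum_le_sum_abs _ _
        _ ≤ ∑ k ∈ Finset.range n, A * ‖h (p (k + 1)) - h (p k)‖ := by
            apply Finset.sum_le_sum
            intro k hk
            rw [Finset.mem_range] at hk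
            rw [abs_mul]
            have hco : |h (p (k + 1)) j - h (p k) j| ≤ ‖h (p (k + 1)) - h (p k)‖ := by
              have := coord_abs_le_norm (h (p (k + 1)) - h (p k)) j
              simpa [PiLp.sub_apply] using this
            have := hf k hk.le
            nlinarith [abs_nonneg ((X (p k) i - X s i) - (X' (p k) i - X' s i)),
              abs_nonneg (h (p (k + 1)) j - h (p k) j), norm_nonneg (h (p (k + 1)) - h (p k))]
        _ = A * ∑ k ∈ Finset.range n, ‖h (p (k + 1)) - h (p k)‖ := by
            rw [Finset.mul_sum]
        _ ≤ A * V := by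
            have := sum_norm_incr_le h0 hn hm h hV0 hVar'
            nlinarith
    -- bound on I2 - J2
    have hd2 : IsRS (fun r => h r i - h s i) (fun r => X r j - X' r j) s t
        (I2 s t i j - J2 s t i j) := rs_sub_g hI2 hJ2
    have hb2 : |I2 s t i j - J2 s t i j| ≤ A * V := by
      apply rs_abs_le hst hd2
      intro n p h0 hn hm
      -- Abel summation with G shifted by its value at t
      have habel := abel_sum (fun k => h (p k) i - h s i)
        (fun k => (X (p k) j - X' (p k) j) - (X t j - X' t j)) n
      have hshift : ∑ k ∈ Finset.range n, (h (p k) i - h s i) *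
          ((X (p (k+1)) j - X' (p (k+1)) j) - (X (p k) j - X' (p k) j)) =
          ∑ k ∈ Finset.range n, (fun k => h (p k) i - h s i) k *
          ((fun k => (X (p k) j - X' (p k) j) - (X t j - X' t j)) (k+1) -
           (fun k => (X (p k) j - X' (p k) j) - (X t j - X' t j)) k) := by
        apply Finset.sum_congr rfl; intros; simp only; ring
      rw [hshift, habel]
      simp only [h0, hn, sub_self, mul_zero, zero_mul, zero_sub, sub_zero]
      rw [abs_neg]
      have hg : ∀ k ≤ n, |(X (p k) j - X' (p k) j) - (X t j - X' t j)| ≤ A := by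
        intro k hk
        obtain ⟨hk1, hk2⟩ := partition_mem h0 hn hm k hk
        have hmem : p k ∈ Icc (0:ℝ) T := ⟨by linarith, by linarith⟩
        have := hD (p k) hmem t ⟨by linarith, htT⟩
        have hcoord : |(X t - X' t - (X (p k) - X' (p k))) j| ≤
            ‖(X t - X' t) - (X (p k) - X' (p k))‖ := coord_abs_le_norm _ j
        have hvi : ((X t - X' t - (X (p k) - X' (p k))) : EuclideanSpace ℝ (Fin d)) j =
            (X t j - X' t j) - (X (p k) j - X' (p k) j) := by
          simp [PiLp.sub_apply]; try ring
        rw [hvi] at hcoord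
        have hpow : |t - p k| ^ γ ≤ (t - s) ^ γ := by
          rw [abs_of_nonneg (by linarith)]
          exact Real.rpow_le_rpow (by linarith) (by linarith) (by linarith)
        rw [abs_sub_comm]
        calc |(X t j - X' t j) - (X (p k) j - X' (p k) j)| ≤ CD * |t - p k| ^ γ :=
              le_trans hcoord this
          _ ≤ CD * (t - s) ^ γ := by nlinarith [abs_nonneg (t - p k)]
      calc |∑ k ∈ Finset.range n, ((X (p (k+1)) j - X' (p (k+1)) j) - (X t j - X' t j)) *
            ((h (p (k+1)) i - h s i) - (h (p k) i - h s i))|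
          ≤ ∑ k ∈ Finset.range n, |((X (p (k+1)) j - X' (p (k+1)) j) - (X t j - X' t j)) *
            ((h (p (k+1)) i - h s i) - (h (p k) i - h s i))| := Finset.abs_sum_le_sum_abs _ _
        _ ≤ ∑ k ∈ Finset.range n, A * ‖h (p (k + 1)) - h (p k)‖ := by
            apply Finset.sum_le_sum
            intro k hk
            rw [Finset.mem_range] at hk
            rw [abs_mul]
            have hco : |(h (p (k+1)) i - h s i) - (h (p k) i - h s i)| ≤
                ‖h (p (k + 1)) - h (p k)‖ := by
              have := coord_abs_le_norm (h (p (k + 1)) - h (p k)) i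
              have heq : ((h (p (k+1)) - h (p k)) : EuclideanSpace ℝ (Fin d)) i =
                  (h (p (k+1)) i - h s i) - (h (p k) i - h s i) := by
                simp [PiLp.sub_apply]
              rwa [heq] at this
            have := hg (k + 1) hk
            nlinarith [abs_nonneg ((X (p (k+1)) j - X' (p (k+1)) j) - (X t j - X' t j)),
              abs_nonneg ((h (p (k+1)) i - h s i) - (h (p k) i - h s i)),
              norm_nonneg (h (p (k + 1)) - h (p k))]
        _ = A * ∑ k ∈ Finset.range n, ‖h (p (k + 1)) - h (p k)‖ := by rw [Finset.mul_sum]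
        _ ≤ A * V := by
            have := sum_norm_incr_le h0 hn hm h hV0 hVar'
            nlinarith
    -- I3 = J3
    have hb3 : I3 s t i j = J3 s t i j := rs_unique hst hI3 hJ3
    -- combine
    have hXXd := hDD s t hs hst htT i j
    have hAV : A * V = Ch * CD * (t - s) ^ (2 * γ) := by
      rw [hA, hVdef]
      have : (t - s) ^ (2 * γ) = (t - s) ^ γ * (t - s) ^ γ := by
        rw [two_mul, Real.rpow_add' hts (by intro hc; nlinarith)]
      rw [this]; ring
    have hpow0 : (0:ℝ) ≤ (t - s) ^ (2 * γ) := Real.rpow_nonneg hts _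
    have key : |(XX s t i j + I1 s t i j + I2 s t i j + I3 s t i j) -
        (XX' s t i j + J1 s t i j + J2 s t i j + J3 s t i j)| ≤
        |XX s t i j - XX' s t i j| + |I1 s t i j - J1 s t i j| + |I2 s t i j - J2 s t i j| := by
      rw [hb3]
      calc |(XX s t i j + I1 s t i j + I2 s t i j + J3 s t i j) -
          (XX' s t i j + J1 s t i j + J2 s t i j + J3 s t i j)| =
          |(XX s t i j - XX' s t i j) + (I1 s t i j - J1 s t i j) + (I2 s t i j - J2 s t i j)| :=
            by ring_nf
        _ ≤ _ := by
            have := abs_add_le ((XX s t i j - XX' s t i j) + (I1 s t i j - J1 s t i j))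
              (I2 s t i j - J2 s t i j)
            have := abs_add_le (XX s t i j - XX' s t i j) (I1 s t i j - J1 s t i j)
            linarith
    rw [hAV] at hb1 hb2
    calc |(XX s t i j + I1 s t i j + I2 s t i j + I3 s t i j) -
        (XX' s t i j + J1 s t i j + J2 s t i j + J3 s t i j)| ≤
        |XX s t i j - XX' s t i j| + |I1 s t i j - J1 s t i j| + |I2 s t i j - J2 s t i j| := key
      _ ≤ CD * (t - s) ^ (2 * γ) + Ch * CD * (t - s) ^ (2 * γ) + Ch * CD * (t - s) ^ (2 * γ) := by
          linarith
      _ ≤ 2 * (1 + Ch) * CD * (t - s) ^ (2 * γ) := by nlinarith
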